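/- Let t > 0 and ε = −1. Then the two points (0, √(1 + 2t²)/2) and (0, −√(1 + 2t²)/2) are strict local maxima of F_{t,−1}. -/
import Mathlib


/-- The Karigiannis–Leung Chern–Simons type functional, evaluated on the
connections A = i(a₁η₁ + a₂η₂ + a₃η₃) on the trivial complex line bundle over a
compact 3-Sasakian 7-manifold with the coclosed G₂-structure φ_{t,ε}
(normalized so that Vol(X, g^{ts}) = 1), with x = a₃ and y² = a₁² + a₂²:
F_{t,ε}(x,y) = −[(x² + y²)(2(x² + y²) − 1) + 2t²(x² + εy²)]. -/
def F (t ε : ℝ) : ℝ × ℝ → ℝ := fun p =>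
  -((p.1 ^ 2 + p.2 ^ 2) * (2 * (p.1 ^ 2 + p.2 ^ 2) - 1) + 2 * t ^ 2 * (p.1 ^ 2 + ε * p.2 ^ 2))

lemma F_val (t : ℝ) (y : ℝ) (hy : y ^ 2 = (1 + 2 * t ^ 2) / 4) :
    F t (-1) (0, y) = (1 + 2 * t ^ 2) ^ 2 / 8 := by
  simp only [F]
  rw [hy]; ring

lemma F_lt (t : ℝ) (x y : ℝ) (hy : 1 / 4 < y ^ 2)
    (h : x ≠ 0 ∨ y ^ 2 ≠ (1 + 2 * t ^ 2) / 4) :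
    F t (-1) (x, y) < (1 + 2 * t ^ 2) ^ 2 / 8 := by
  simp only [F]
  rcases h with h | h
  · have hx2 : 0 < x ^ 2 := by rcases h.lt_or_gt with h' | h' <;> nlinarith
    have hterm : 0 < x ^ 2 * (4 * y ^ 2 + 2 * t ^ 2 - 1) := by nlinarith [sq_nonneg t]
    nlinarith [sq_nonneg (y ^ 2 - (1 + 2 * t ^ 2) / 4), sq_nonneg (x ^ 2)]
  · have hq : 0 < (y ^ 2 - (1 + 2 * t ^ 2) / 4) ^ 2 := by
      rcases (sub_ne_zero_of_ne h).lt_or_gt with h' | h' <;> nlinarith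
    have hterm : 0 ≤ x ^ 2 * (4 * y ^ 2 + 2 * t ^ 2 - 1) := by
      apply mul_nonneg (sq_nonneg x); nlinarith [sq_nonneg t]
    nlinarith [sq_nonneg (x ^ 2)]

/-- For t > 0 and ε = −1, the two points (0, ±√(1 + 2t²)/2) (corresponding to
the circle of non-trivial deformed G₂-instantons for φ_{t,−1}) are strict local
maxima of F_{t,−1}. -/
theorem stmt_16 (t : ℝ) (ht : 0 < t) :
    (∃ U ∈ nhds ((0, Real.sqrt (1 + 2 * t ^ 2) / 2) : ℝ × ℝ),
      ∀ q ∈ U, q ≠ ((0, Real.sqrt (1 + 2 * t ^ 2) / 2) : ℝ × ℝ) →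
        F t (-1) q < F t (-1) (0, Real.sqrt (1 + 2 * t ^ 2) / 2)) ∧
    (∃ U ∈ nhds ((0, -(Real.sqrt (1 + 2 * t ^ 2) / 2)) : ℝ × ℝ),
      ∀ q ∈ U, q ≠ ((0, -(Real.sqrt (1 + 2 * t ^ 2) / 2)) : ℝ × ℝ) →
        F t (-1) q < F t (-1) (0, -(Real.sqrt (1 + 2 * t ^ 2) / 2))) := by
  have hs : (0:ℝ) ≤ 1 + 2 * t ^ 2 := by positivity
  have h0 : Real.sqrt (1 + 2 * t ^ 2) ^ 2 = 1 + 2 * t ^ 2 := Real.sq_sqrt hs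
  have hy0sq : (Real.sqrt (1 + 2 * t ^ 2) / 2) ^ 2 = (1 + 2 * t ^ 2) / 4 := by
    rw [div_pow, h0]; norm_num
  have h1lt : (1:ℝ) < Real.sqrt (1 + 2 * t ^ 2) := by
    nlinarith [Real.sqrt_nonneg (1 + 2 * t ^ 2), h0, sq_nonneg t]
  have hval : F t (-1) (0, Real.sqrt (1 + 2 * t ^ 2) / 2) = (1 + 2 * t ^ 2) ^ 2 / 8 :=
    F_val t _ hy0sq
  have hval' : F t (-1) (0, -(Real.sqrt (1 + 2 * t ^ 2) / 2)) = (1 + 2 * t ^ 2) ^ 2 / 8 :=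
    F_val t _ (by rw [neg_pow]; simp [hy0sq])
  constructor
  · refine ⟨{p : ℝ × ℝ | 1 / 2 < p.2}, ?_, ?_⟩
    · exact (isOpen_lt continuous_const continuous_snd).mem_nhds (by simpa using by linarith)
    · rintro ⟨x, y⟩ hq hne
      simp only [Set.mem_setOf_eq] at hq
      rw [hval]
      refine F_lt t x y (by nlinarith) ?_
      simp only [ne_eq, Prod.mk.injEq, not_and_or] at hne
      rcases hne with h | h
      · exact Or.inl h
      · refine Or.inr fun hc => h ?_
        have hfac : (y - Real.sqrt (1 + 2 * t ^ 2) / 2) * (y + Real.sqrt (1 + 2 * t ^ 2) / 2) = 0 := by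
          linear_combination hc - hy0sq
        rcases mul_eq_zero.mp hfac with h' | h'
        · linarith
        · nlinarith [Real.sqrt_nonneg (1 + 2 * t ^ 2)]
  · refine ⟨{p : ℝ × ℝ | p.2 < -(1 / 2)}, ?_, ?_⟩
    · exact (isOpen_lt continuous_snd continuous_const).mem_nhds (by simp; linarith)
    · rintro ⟨x, y⟩ hq hne
      simp only [Set.mem_setOf_eq] at hq
      rw [hval']
      refine F_lt t x y (by nlinarith) ?_
      simp only [ne_eq, Prod.mk.injEq, not_and_or] at hne
      rcases hne with h | h
      · exact Or.inl h
      · refine Or.inr fun hc => h ?_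
        have hfac : (y - Real.sqrt (1 + 2 * t ^ 2) / 2) * (y + Real.sqrt (1 + 2 * t ^ 2) / 2) = 0 := by
          linear_combination hc - hy0sq
        rcases mul_eq_zero.mp hfac with h' | h'
        · nlinarith [Real.sqrt_nonneg (1 + 2 * t ^ 2)]
        · linarith
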